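/- arXiv:1709.01194 — 3 statements merged into one kernel-verified Lean document; each statement's English description precedes it below -/
import Mathlib

section
/- For every θ∈[−1/2,1/2], one has (1/(2π))·∫_{−π}^{π} (1 + min{cos t, cos(2πθ − t)}) dt = 1 − (2/π)·|sin(πθ)|. -/
open Real intervalIntegral

lemma min_half (a b : ℝ) : min a b = (a + b - |a - b|) / 2 := by
  rcases le_total a b with h | h
  · rw [min_eq_left h, abs_of_nonpos (by linarith)]; ring
  · rw [min_eq_right h, abs_of_nonneg (by linarith)]; ring

lemma abs_sin_periodic : Function.Periodic (fun t : ℝ => |Real.sin t|) (2 * π) :=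
  fun x => by simp [Real.sin_add_two_pi]

lemma int_abs_sin_base : ∫ t in (-π)..π, |Real.sin t| = 4 := by
  have h1 : ∫ t in (-π)..(0:ℝ), |Real.sin t| = 2 := by
    rw [intervalIntegral.integral_congr (g := fun t => -Real.sin t)]
    · rw [intervalIntegral.integral_neg, integral_sin]
      norm_num
    · intro x hx
      rw [Set.uIcc_of_le (neg_nonpos.mpr Real.pi_nonneg)] at hx
      exact abs_of_nonpos (Real.sin_nonpos_of_nonpos_of_neg_pi_le (by linarith [hx.2]) (by linarith [hx.1]))
  have h2 : ∫ t in (0:ℝ)..π, |Real.sin t| = 2 := by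
    rw [intervalIntegral.integral_congr (g := fun t => Real.sin t)]
    · rw [integral_sin]; simp; norm_num
    · intro x hx
      rw [Set.uIcc_of_le Real.pi_nonneg] at hx
      exact abs_of_nonneg (Real.sin_nonneg_of_nonneg_of_le_pi hx.1 hx.2)
  have := intervalIntegral.integral_add_adjacent_intervals (a := -π) (b := 0) (c := π)
    (μ := MeasureTheory.volume)
    (f := fun t => |Real.sin t|) (by apply Continuous.intervalIntegrable; fun_prop)
    (by apply Continuous.intervalIntegrable; fun_prop)
  rw [← this, h1, h2]; norm_num

lemma int_abs_sin (c : ℝ) : ∫ t in (-π)..π, |Real.sin (t - c)| = 4 := by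
  rw [intervalIntegral.integral_comp_sub_right (fun t => |Real.sin t|) c]
  have key := abs_sin_periodic.intervalIntegral_add_eq (-π - c) (-π)
  have e1 : -π - c + 2 * π = π - c := by ring
  have e2 : -π + 2 * π = π := by ring
  rw [e1, e2] at key
  rw [key, int_abs_sin_base]

theorem statement2 (θ : ℝ) (hθ : θ ∈ Set.Icc (-(1 / 2) : ℝ) (1 / 2)) :
    (1 / (2 * π)) *
        ∫ t in (-π)..π, (1 + min (Real.cos t) (Real.cos (2 * π * θ - t))) =
      1 - (2 / π) * |Real.sin (π * θ)| := by
  set a := 2 * π * θ with ha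
  have hrw : ∀ t : ℝ, (1 + min (Real.cos t) (Real.cos (a - t)))
      = 1 + Real.cos t / 2 + Real.cos (a - t) / 2 - |Real.sin (π * θ)| * |Real.sin (t - π * θ)| := by
    intro t
    rw [min_half]
    have hcc := Real.cos_sub_cos t (a - t)
    have e1 : (t + (a - t)) / 2 = π * θ := by rw [ha]; ring
    have e2 : (t - (a - t)) / 2 = t - π * θ := by rw [ha]; ring
    rw [e1, e2] at hcc
    rw [hcc]
    have habs : |(-2 : ℝ) * Real.sin (π * θ) * Real.sin (t - π * θ)|
        = 2 * (|Real.sin (π * θ)| * |Real.sin (t - π * θ)|) := by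
      rw [abs_mul, abs_mul]; norm_num; ring
    rw [habs]
    ring
  simp only [hrw]
  have i1 : IntervalIntegrable (fun t : ℝ => 1 + Real.cos t / 2 + Real.cos (a - t) / 2)
      MeasureTheory.volume (-π) π := by apply Continuous.intervalIntegrable; fun_prop
  have i2 : IntervalIntegrable (fun t : ℝ => |Real.sin (π * θ)| * |Real.sin (t - π * θ)|)
      MeasureTheory.volume (-π) π := by apply Continuous.intervalIntegrable; fun_prop
  rw [intervalIntegral.integral_sub i1 i2]
  have j1 : IntervalIntegrable (fun t : ℝ => 1 + Real.cos t / 2)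
      MeasureTheory.volume (-π) π := by apply Continuous.intervalIntegrable; fun_prop
  have j2 : IntervalIntegrable (fun t : ℝ => Real.cos (a - t) / 2)
      MeasureTheory.volume (-π) π := by apply Continuous.intervalIntegrable; fun_prop
  have I1 : (∫ t in (-π)..π, (1 + Real.cos t / 2 + Real.cos (a - t) / 2)) = 2 * π := by
    rw [intervalIntegral.integral_add j1 j2]
    have A : (∫ t in (-π)..π, (1 + Real.cos t / 2)) = 2 * π := by
      rw [intervalIntegral.integral_add (by apply Continuous.intervalIntegrable; fun_prop)
        (by apply Continuous.intervalIntegrable; fun_prop)]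
      simp [intervalIntegral.integral_div, integral_cos]
      ring
    have B : (∫ t in (-π)..π, Real.cos (a - t) / 2) = 0 := by
      rw [intervalIntegral.integral_div]
      rw [intervalIntegral.integral_comp_sub_left (fun t => Real.cos t) a]
      rw [integral_cos]
      have : Real.sin (a - -π) = Real.sin (a - π) := by
        rw [sub_neg_eq_add, Real.sin_add_pi, Real.sin_sub_pi]
      rw [this]; simp
    rw [A, B]; ring
  have I2 : (∫ t in (-π)..π, |Real.sin (π * θ)| * |Real.sin (t - π * θ)|)
      = |Real.sin (π * θ)| * 4 := by
    rw [intervalIntegral.integral_const_mul, int_abs_sin]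
  rw [I1, I2]
  have hpi : π ≠ 0 := Real.pi_ne_zero
  field_simp
  ring
end

section
/- Let c=(2π−4)/(3π−2). There is an absolute constant C such that for all real numbers E ≥ 0 and F ≥ 0, ∫_{−1/2}^{1/2} (1 + c·E·cos²(πθ) + c·F)·e^{−c·E·cos²(πθ) − c·F} dθ ≤ C·(1+F)·e^{−c·F}/√(1+E). -/
/-!
Write `a = c E cos² (π θ)`. Since `c ≤ 1` the integrand is at most `(1 + F) e^{-cF} (1 + a) e^{-a}`,
and `(1 + a) e^{-a} ≤ 2 / (1 + a)` because `e^a ≥ 1 + a + a² / 2`. With `s = √(c E)`,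
`1 / (1 + s² y²) ≤ 2 / (1 + s y)²`, and Jordan's inequality `cos (π θ) ≥ 1 - 2 |θ|` turns the
latter into an explicitly integrable function, with integral `1 / (1 + s)` over `[-1/2, 1/2]`.
Finally `c ≥ 1/4` gives `√(1 + E) ≤ 2 (1 + s)`, so `C = 8` works.
-/

open Real MeasureTheory intervalIntegral

theorem integral_neg_self_eq_two_mul_of_even {f : ℝ → ℝ} (hf : ∀ x, f (-x) = f x) {a : ℝ}
    (hfi : IntervalIntegrable f volume 0 a) :
    ∫ x in -a..a, f x = 2 * ∫ x in 0..a, f x := by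
  have hfi' : IntervalIntegrable f volume (-a) 0 := by
    simpa [hf] using ((IntervalIntegrable.iff_comp_neg).mp hfi).symm
  have hleft : ∫ x in -a..0, f x = ∫ x in 0..a, f x := by
    simpa [hf] using (integral_comp_neg (a := 0) (b := a) f).symm
  rw [← integral_add_adjacent_intervals hfi' hfi, hleft, two_mul]

theorem one_add_mul_exp_neg_le_two_div {x : ℝ} (hx : 0 ≤ x) :
    (1 + x) * exp (-x) ≤ 2 / (1 + x) := by
  have hsq : (1 + x) ^ 2 ≤ 2 * exp x := by nlinarith [quadratic_le_exp_of_nonneg hx]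
  rw [le_div_iff₀ (by positivity), exp_neg]
  calc (1 + x) * (exp x)⁻¹ * (1 + x) = (1 + x) ^ 2 * (exp x)⁻¹ := by ring
    _ ≤ 2 * exp x * (exp x)⁻¹ := by gcongr
    _ = 2 := by field_simp

theorem one_sub_two_mul_le_cos_pi_mul {θ : ℝ} (h₀ : 0 ≤ θ) (h₁ : θ ≤ 1 / 2) :
    1 - 2 * θ ≤ cos (π * θ) := by
  have := one_sub_mul_le_cos (x := π * θ) (by positivity) (by nlinarith [pi_pos])
  rwa [← mul_assoc, div_mul_cancel₀ _ pi_ne_zero] at this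

theorem integral_one_div_one_add_mul_one_sub_two_mul_sq {s : ℝ} (hs : 0 ≤ s) :
    ∫ θ in (0 : ℝ)..1 / 2, 1 / (1 + s * (1 - 2 * θ)) ^ 2 = 1 / (2 * (1 + s)) := by
  have hpos : ∀ θ ∈ Set.uIcc (0 : ℝ) (1 / 2), 0 < 1 + s * (1 - 2 * θ) := by
    intro θ hθ
    rw [Set.uIcc_of_le (by norm_num)] at hθ
    nlinarith [hθ.2]
  -- unlike `-1 / (2 s (1 + s (1 - 2θ)))`, this antiderivative is also valid at `s = 0`
  have hderiv : ∀ θ ∈ Set.uIcc (0 : ℝ) (1 / 2),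
      HasDerivAt (fun θ ↦ θ / ((1 + s) * (1 + s * (1 - 2 * θ))))
        (1 / (1 + s * (1 - 2 * θ)) ^ 2) θ := by
    intro θ hθ
    have hden : HasDerivAt (fun θ ↦ (1 + s) * (1 + s * (1 - 2 * θ))) ((1 + s) * (s * -2)) θ := by
      simpa using (((hasDerivAt_id' θ).const_mul 2).const_sub 1 |>.const_mul s |>.const_add 1
        |>.const_mul (1 + s))
    have hne := (hpos θ hθ).ne'
    refine ((hasDerivAt_id' θ).fun_div hden (by positivity)).congr_deriv ?_
    field_simp
    ring
  have hcont : ContinuousOn (fun θ ↦ 1 / (1 + s * (1 - 2 * θ)) ^ 2) (Set.uIcc 0 (1 / 2)) :=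
    continuousOn_const.div (by fun_prop) fun θ hθ ↦ (pow_pos (hpos θ hθ) 2).ne'
  rw [integral_eq_sub_of_hasDerivAt hderiv hcont.intervalIntegrable]
  norm_num
  field_simp

theorem integral_one_div_one_add_mul_cos_sq_le {a : ℝ} (ha : 0 ≤ a) :
    ∫ θ in -(1 / 2 : ℝ)..1 / 2, 1 / (1 + a * cos (π * θ) ^ 2) ≤ 2 / (1 + √a) := by
  set s := √a
  have hs : 0 ≤ s := sqrt_nonneg a
  have hcont : Continuous fun θ ↦ 1 / (1 + a * cos (π * θ) ^ 2) :=
    continuous_const.div (by fun_prop) fun θ ↦ by positivity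
  have hpoint : ∀ θ ∈ Set.Icc (0 : ℝ) (1 / 2),
      1 / (1 + a * cos (π * θ) ^ 2) ≤ 2 * (1 / (1 + s * (1 - 2 * θ)) ^ 2) := by
    rintro θ ⟨h₀, h₁⟩
    have hcos := one_sub_two_mul_le_cos_pi_mul h₀ h₁
    have hpos : 0 < 1 + s * (1 - 2 * θ) := by nlinarith
    have hlin : 1 + s * (1 - 2 * θ) ≤ 1 + s * cos (π * θ) := by gcongr
    rw [mul_one_div, div_le_div_iff₀ (by positivity) (by positivity), ← sq_sqrt ha]
    -- `(1 + s y)² ≤ 2 (1 + s² y²)`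
    nlinarith [sq_nonneg (1 - s * cos (π * θ)), pow_le_pow_left₀ hpos.le hlin 2]
  have hvalue := integral_one_div_one_add_mul_one_sub_two_mul_sq hs
  have hint : IntervalIntegrable (fun θ ↦ 1 / (1 + s * (1 - 2 * θ)) ^ 2) volume 0 (1 / 2) :=
    intervalIntegrable_of_integral_ne_zero (by rw [hvalue]; positivity)
  calc ∫ θ in -(1 / 2 : ℝ)..1 / 2, 1 / (1 + a * cos (π * θ) ^ 2)
      = 2 * ∫ θ in (0 : ℝ)..1 / 2, 1 / (1 + a * cos (π * θ) ^ 2) :=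
        integral_neg_self_eq_two_mul_of_even (fun θ ↦ by rw [mul_neg, cos_neg])
          (hcont.intervalIntegrable _ _)
    _ ≤ 2 * ∫ θ in (0 : ℝ)..1 / 2, 2 * (1 / (1 + s * (1 - 2 * θ)) ^ 2) := by
        gcongr
        exact integral_mono_on (by norm_num) (hcont.intervalIntegrable _ _) (hint.const_mul 2)
          hpoint
    _ = 2 / (1 + s) := by
        rw [intervalIntegral.integral_const_mul, hvalue]
        field_simp

theorem one_add_add_mul_exp_neg_sub_le {c x F : ℝ} (hc₁ : c ≤ 1) (hx : 0 ≤ x)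
    (hF : 0 ≤ F) :
    (1 + x + c * F) * exp (-x - c * F) ≤ (1 + F) * exp (-c * F) * (2 / (1 + x)) := by
  have hcF : c * F ≤ F := mul_le_of_le_one_left hF hc₁
  calc (1 + x + c * F) * exp (-x - c * F)
      ≤ ((1 + x) * (1 + F)) * (exp (-x) * exp (-c * F)) := by
        rw [← exp_add, neg_mul, sub_eq_add_neg]
        gcongr
        nlinarith [mul_nonneg hx hF]
    _ = (1 + F) * exp (-c * F) * ((1 + x) * exp (-x)) := by ring
    _ ≤ (1 + F) * exp (-c * F) * (2 / (1 + x)) := by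
        gcongr
        exact one_add_mul_exp_neg_le_two_div hx

theorem two_mul_two_div_one_add_sqrt_mul_le {c E : ℝ} (hc : 1 / 4 ≤ c) (hE : 0 ≤ E) :
    2 * (2 / (1 + √(c * E))) ≤ 8 / √(1 + E) := by
  have ht : 0 ≤ √(c * E) := sqrt_nonneg _
  have hsq : √(c * E) ^ 2 = c * E := sq_sqrt (by positivity)
  have hroot : √(1 + E) ≤ 2 * (1 + √(c * E)) := by
    rw [sqrt_le_left (by positivity)]
    nlinarith
  rw [mul_div_assoc', div_le_div_iff₀ (by positivity) (by positivity)]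
  nlinarith

theorem statement6 :
    ∃ C : ℝ, ∀ E F : ℝ, 0 ≤ E → 0 ≤ F →
      (∫ θ in (-(1 / 2) : ℝ)..(1 / 2),
          (1 + ((2 * π - 4) / (3 * π - 2)) * E * Real.cos (π * θ) ^ 2 +
              ((2 * π - 4) / (3 * π - 2)) * F) *
            Real.exp (-(((2 * π - 4) / (3 * π - 2)) * E * Real.cos (π * θ) ^ 2) -
              ((2 * π - 4) / (3 * π - 2)) * F)) ≤
        C * (1 + F) * Real.exp (-((2 * π - 4) / (3 * π - 2)) * F) /
          Real.sqrt (1 + E) := by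
  refine ⟨8, fun E F hE hF ↦ ?_⟩
  set c := (2 * π - 4) / (3 * π - 2)
  have hden : 0 < 3 * π - 2 := by linarith [pi_gt_three]
  have hc₁ : c ≤ 1 := by rw [div_le_one hden]; linarith [pi_pos]
  have hc : 1 / 4 ≤ c := by rw [le_div_iff₀ hden]; linarith [pi_gt_three]
  set K := (1 + F) * exp (-c * F)
  calc _ ≤ ∫ θ in -(1 / 2 : ℝ)..1 / 2, K * (2 / (1 + c * E * cos (π * θ) ^ 2)) := by
        refine integral_mono_on (by norm_num) (Continuous.intervalIntegrable (by fun_prop) _ _)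
          (Continuous.intervalIntegrable ?_ _ _) fun θ _ ↦
            one_add_add_mul_exp_neg_sub_le hc₁ (by positivity) hF
        exact continuous_const.mul (continuous_const.div (by fun_prop) fun θ ↦ by positivity)
    _ = K * (2 * ∫ θ in -(1 / 2 : ℝ)..1 / 2, 1 / (1 + c * E * cos (π * θ) ^ 2)) := by
        simp only [← intervalIntegral.integral_const_mul, mul_one_div]
    _ ≤ K * (2 * (2 / (1 + √(c * E)))) := by
        gcongr
        exact integral_one_div_one_add_mul_cos_sq_le (by positivity)
    _ ≤ K * (8 / √(1 + E)) := by gcongr; exact two_mul_two_div_one_add_sqrt_mul_le hc hE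
    _ = 8 * (1 + F) * exp (-c * F) / √(1 + E) := by ring
end

section
/- Let f be a strongly additive arithmetic function with f(p)∈{0,1} for all primes p, and let c₀>0. Suppose there is a constant K such that ∑_{p≤y} (1−f(p))·log p ≤ K·y/(log log y)^{max(1,c₀)} for all y≥16. Then there is a constant K' (depending only on K and c₀) such that F(x) = ∑_{p≤x, f(p)=0} 1/p ≤ K'·log log log x for all x≥16. -/
/-!
Split the primes `p` with `f p = 0` into dyadic blocks `2 ^ k ≤ p < 2 ^ (k + 1)`. With `y = 2 ^ k`,
`1 / p ≤ log p / (y log y)` on the block, so the hypothesis at `2 y` bounds the contribution of the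
block by `≪ K / (log y · log log y)`. As `log log log` has derivative `1 / (y log y log log y)`,
this is `≪ K` times the increment of `log log log` across the block, and the blocks telescope to
`≪ K log log log x`. Primes below `16` add only a constant, absorbed since
`log log log x ≥ log log log 16 > 0`.
-/

open Finset Real

noncomputable def primesUpTo (x : ℝ) : Finset ℕ :=
  (Finset.range (⌊x⌋₊ + 1)).filter Nat.Prime

noncomputable def Ffun (f : ℕ → ℝ) (x : ℝ) : ℝ :=
  ∑ p ∈ (primesUpTo x).filter (fun p => f p = 0), (1 : ℝ) / p

noncomputable def thetaOn (P : ℕ → Prop) [DecidablePred P] (y : ℝ) : ℝ :=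
  ∑ p ∈ (primesUpTo y).filter P, log p

lemma mem_primesUpTo {y : ℝ} (hy : 0 ≤ y) {p : ℕ} :
    p ∈ primesUpTo y ↔ p.Prime ∧ (p : ℝ) ≤ y := by
  rw [primesUpTo, mem_filter, mem_range, Nat.lt_succ_iff, Nat.le_floor_iff hy, and_comm]

lemma one_lt_log_log_sixteen : 1 < log (log 16) := by
  have h16 : log 16 = 4 * log 2 := by
    rw [show (16 : ℝ) = 2 ^ 4 by norm_num, log_pow]
    norm_num
  rw [lt_log_iff_exp_lt (by rw [h16]; positivity), h16]
  linarith [exp_one_lt_d9, log_two_gt_d9]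

lemma log_log_le_log_log {a b : ℝ} (ha : 16 ≤ a) (hab : a ≤ b) :
    log (log a) ≤ log (log b) :=
  log_le_log (log_pos (by linarith)) (log_le_log (by linarith) hab)

lemma one_lt_log_log {y : ℝ} (hy : 16 ≤ y) : 1 < log (log y) :=
  one_lt_log_log_sixteen.trans_le (log_log_le_log_log le_rfl hy)

lemma log_log_log_le_log_log_log {a b : ℝ} (ha : 16 ≤ a) (hab : a ≤ b) :
    log (log (log a)) ≤ log (log (log b)) :=
  log_le_log (by linarith [one_lt_log_log ha]) (log_log_le_log_log ha hab)

lemma log_log_log_two_mul_le {x : ℝ} (hx : 16 ≤ x) :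
    log (log (log (2 * x))) ≤ log 2 + log (log (log x)) := by
  have hlx : log 2 ≤ log x := log_le_log two_pos (by linarith)
  have hllx := one_lt_log_log hx
  have hl2 : 0 < log 2 ∧ log 2 < 1 := ⟨log_pos one_lt_two, by linarith [log_two_lt_d9]⟩
  have h1 : log (2 * x) ≤ 2 * log x := by
    rw [log_mul two_ne_zero (by linarith)]
    linarith
  have h2 : log (log (2 * x)) ≤ 2 * log (log x) :=
    calc log (log (2 * x)) ≤ log (2 * log x) := log_le_log (log_pos (by linarith)) h1
      _ = log 2 + log (log x) := log_mul two_ne_zero (by linarith)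
      _ ≤ 2 * log (log x) := by linarith
  calc log (log (log (2 * x))) ≤ log (2 * log (log x)) :=
        log_le_log (by linarith [one_lt_log_log (show 16 ≤ 2 * x by linarith)]) h2
    _ = log 2 + log (log (log x)) := log_mul two_ne_zero (by linarith)

lemma sub_div_le_log_sub_log {a b : ℝ} (ha : 0 < a) (hab : a ≤ b) :
    (b - a) / b ≤ log b - log a := by
  have hb : 0 < b := ha.trans_le hab
  have h := one_sub_inv_le_log_of_pos (div_pos hb ha)
  rw [inv_div, log_div hb.ne' ha.ne'] at h
  calc (b - a) / b = 1 - a / b := by field_simp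
    _ ≤ log b - log a := h

lemma sub_div_log_mul_log_log_le {a b : ℝ} (ha : 16 ≤ a) (hab : a ≤ b) :
    (log b - log a) / (log b * log (log b)) ≤ log (log (log b)) - log (log (log a)) := by
  have hla : 0 < log a := log_pos (by linarith)
  have hllb := one_lt_log_log (ha.trans hab)
  have h1 := sub_div_le_log_sub_log hla (log_le_log (by linarith) hab)
  have h2 := sub_div_le_log_sub_log (by linarith [one_lt_log_log ha]) (log_log_le_log_log ha hab)
  calc (log b - log a) / (log b * log (log b)) = (log b - log a) / log b / log (log b) := by
        rw [div_div]
    _ ≤ (log (log b) - log (log a)) / log (log b) := by gcongr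
    _ ≤ log (log (log b)) - log (log (log a)) := h2

lemma one_div_log_mul_log_log_le {y : ℝ} (hy : 16 ≤ y) :
    1 / (log y * log (log (2 * y))) ≤
      2 / log 2 * (log (log (log (2 * y))) - log (log (log y))) := by
  have hly : log 2 ≤ log y := log_le_log two_pos (by linarith)
  have hl2 : 0 < log 2 := log_pos one_lt_two
  have hll := one_lt_log_log (show 16 ≤ 2 * y by linarith)
  have hlog2y : log (2 * y) = log 2 + log y := log_mul two_ne_zero (by linarith)
  have key := sub_div_log_mul_log_log_le hy (show y ≤ 2 * y by linarith)
  rw [hlog2y, add_sub_cancel_right, ← hlog2y] at key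
  calc 1 / (log y * log (log (2 * y))) = 2 / (2 * log y * log (log (2 * y))) := by
        field_simp
    _ ≤ 2 / (log (2 * y) * log (log (2 * y))) := by
        refine div_le_div_of_nonneg_left zero_le_two (mul_pos (by linarith) (by linarith)) ?_
        gcongr
        linarith
    _ = 2 / log 2 * (log 2 / (log (2 * y) * log (log (2 * y)))) := by field_simp
    _ ≤ 2 / log 2 * (log (log (log (2 * y))) - log (log (log y))) := by gcongr

lemma one_div_le_log_div_mul_log {a t : ℝ} (ha : 1 < a) (hat : a ≤ t) :
    1 / t ≤ log t / (a * log a) := by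
  have hla : 0 < log a := log_pos ha
  rw [div_le_div_iff₀ (by linarith) (by positivity), one_mul, mul_comm (log t)]
  exact mul_le_mul hat (log_le_log (by linarith) hat) hla.le (by linarith)

section

variable {P : ℕ → Prop} [DecidablePred P]

lemma thetaOn_nonneg (y : ℝ) : 0 ≤ thetaOn P y :=
  sum_nonneg fun p _ => log_natCast_nonneg p

lemma sum_one_div_le_thetaOn_div {s : Finset ℕ} {k : ℕ} (hk : 1 ≤ k)
    (hs : ∀ p ∈ s, p.Prime ∧ P p ∧ Nat.log 2 p = k) :
    ∑ p ∈ s, (1 : ℝ) / p ≤ thetaOn P (2 ^ (k + 1)) / (2 ^ k * log (2 ^ k)) := by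
  have h2k : (1 : ℝ) < 2 ^ k := one_lt_pow₀ one_lt_two (by omega)
  have hsub : s ⊆ (primesUpTo (2 ^ (k + 1))).filter P := by
    intro p hp
    obtain ⟨hp, hP, rfl⟩ := hs p hp
    rw [mem_filter, mem_primesUpTo (by positivity)]
    exact ⟨⟨hp, by exact_mod_cast (Nat.lt_pow_succ_log_self one_lt_two p).le⟩, hP⟩
  calc ∑ p ∈ s, (1 : ℝ) / p ≤ ∑ p ∈ s, log p / (2 ^ k * log (2 ^ k)) := by
        refine sum_le_sum fun p hp => one_div_le_log_div_mul_log h2k ?_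
        obtain ⟨hp, -, rfl⟩ := hs p hp
        exact_mod_cast Nat.pow_log_le_self 2 hp.ne_zero
    _ = (∑ p ∈ s, log p) / (2 ^ k * log (2 ^ k)) := (sum_div _ _ _).symm
    _ ≤ thetaOn P (2 ^ (k + 1)) / (2 ^ k * log (2 ^ k)) := by
        have := log_pos h2k
        gcongr
        exact sum_le_sum_of_subset_of_nonneg hsub fun p _ _ => log_natCast_nonneg p

lemma sum_one_div_le_mul_log_log_log_sub {K : ℝ} (hK : 0 ≤ K)
    (hθ : ∀ y, 16 ≤ y → thetaOn P y ≤ K * y / log (log y)) {s : Finset ℕ} {k : ℕ} (hk : 4 ≤ k)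
    (hs : ∀ p ∈ s, p.Prime ∧ P p ∧ Nat.log 2 p = k) :
    ∑ p ∈ s, (1 : ℝ) / p ≤
      4 * K / log 2 * (log (log (log (2 ^ (k + 1)))) - log (log (log (2 ^ k)))) := by
  have hy : (16 : ℝ) ≤ 2 ^ k :=
    calc (16 : ℝ) = 2 ^ 4 := by norm_num
      _ ≤ 2 ^ k := pow_le_pow_right₀ one_le_two hk
  rw [pow_succ']
  set y : ℝ := 2 ^ k
  have hly : 0 < log y := log_pos (by linarith)
  have hlly := one_lt_log_log (show 16 ≤ 2 * y by linarith)
  calc ∑ p ∈ s, (1 : ℝ) / p ≤ thetaOn P (2 * y) / (y * log y) := by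
        simpa only [pow_succ'] using sum_one_div_le_thetaOn_div (by omega) hs
    _ ≤ K * (2 * y) / log (log (2 * y)) / (y * log y) :=
        div_le_div_of_nonneg_right (hθ _ (by linarith)) (by positivity)
    _ = 2 * K * (1 / (log y * log (log (2 * y)))) := by
        field_simp
    _ ≤ 2 * K * (2 / log 2 * (log (log (log (2 * y))) - log (log (log y)))) := by
        gcongr
        exact one_div_log_mul_log_log_le hy
    _ = _ := by ring

lemma sum_one_div_le_mul_log_log_log_two_pow {K : ℝ} (hK : 0 ≤ K)
    (hθ : ∀ y, 16 ≤ y → thetaOn P y ≤ K * y / log (log y)) {s : Finset ℕ} {N : ℕ} (hN : 3 ≤ N)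
    (hs : ∀ p ∈ s, p.Prime ∧ P p ∧ 16 ≤ p ∧ Nat.log 2 p ≤ N) :
    ∑ p ∈ s, (1 : ℝ) / p ≤ 4 * K / log 2 * log (log (log (2 ^ (N + 1)))) := by
  have hmaps : ∀ p ∈ s, Nat.log 2 p ∈ Ico 4 (N + 1) := fun p hp =>
    mem_Ico.2 ⟨Nat.le_log_of_pow_le one_lt_two (hs p hp).2.2.1, Nat.lt_succ_of_le (hs p hp).2.2.2⟩
  rw [← sum_fiberwise_of_maps_to hmaps]
  have h16 : 0 ≤ log (log (log ((2 : ℝ) ^ 4))) := by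
    rw [show (2 : ℝ) ^ 4 = 16 by norm_num]
    exact (log_pos one_lt_log_log_sixteen).le
  calc ∑ k ∈ Ico 4 (N + 1), ∑ p ∈ s with Nat.log 2 p = k, (1 : ℝ) / p
      ≤ ∑ k ∈ Ico 4 (N + 1),
          4 * K / log 2 * (log (log (log (2 ^ (k + 1)))) - log (log (log (2 ^ k)))) := by
        refine sum_le_sum fun k hk => sum_one_div_le_mul_log_log_log_sub hK hθ (mem_Ico.1 hk).1 ?_
        intro p hp
        obtain ⟨hp, hlog⟩ := mem_filter.1 hp
        exact ⟨(hs p hp).1, (hs p hp).2.1, hlog⟩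
    _ = 4 * K / log 2 * (log (log (log (2 ^ (N + 1)))) - log (log (log (2 ^ 4)))) := by
        rw [← mul_sum, sum_Ico_sub (fun k => log (log (log ((2 : ℝ) ^ k)))) (by omega)]
    _ ≤ 4 * K / log 2 * log (log (log (2 ^ (N + 1)))) := by
        have := log_pos one_lt_two
        gcongr
        linarith

lemma sum_one_div_le_add_mul_log_log_log {K : ℝ} (hK : 0 ≤ K)
    (hθ : ∀ y, 16 ≤ y → thetaOn P y ≤ K * y / log (log y)) {x : ℝ} (hx : 16 ≤ x) :
    ∑ p ∈ (primesUpTo x).filter P, (1 : ℝ) / p ≤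
      16 + 4 * K + 4 * K / log 2 * log (log (log x)) := by
  set N := Nat.log 2 ⌊x⌋₊
  have hx0 : 0 ≤ x := by linarith
  have hn : 2 ^ 4 ≤ ⌊x⌋₊ := Nat.le_floor (by norm_num; linarith)
  have hN : 4 ≤ N := Nat.le_log_of_pow_le one_lt_two hn
  have h2N : (2 : ℝ) ^ N ≤ x :=
    le_trans (by exact_mod_cast Nat.pow_log_le_self 2 (by omega)) (Nat.floor_le hx0)
  have hsmall : ∑ p ∈ (primesUpTo x).filter P with p < 16, (1 : ℝ) / p ≤ 16 := by
    have hsub : ((primesUpTo x).filter P).filter (· < 16) ⊆ range 16 := fun p hp =>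
      mem_range.2 (mem_filter.1 hp).2
    calc ∑ p ∈ (primesUpTo x).filter P with p < 16, (1 : ℝ) / p
        ≤ #(((primesUpTo x).filter P).filter (· < 16)) • (1 : ℝ) := by
          refine sum_le_card_nsmul _ _ _ fun p hp => div_le_one_of_le₀ ?_ (Nat.cast_nonneg p)
          simp only [mem_filter, mem_primesUpTo hx0] at hp
          exact_mod_cast hp.1.1.1.one_lt.le
      _ ≤ 16 := by
          rw [nsmul_one]
          exact_mod_cast (card_le_card hsub).trans_eq (card_range 16)
  have hlarge : ∑ p ∈ (primesUpTo x).filter P with ¬p < 16, (1 : ℝ) / p ≤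
      4 * K / log 2 * log (log (log (2 ^ (N + 1)))) := by
    refine sum_one_div_le_mul_log_log_log_two_pow hK hθ (by omega) fun p hp => ?_
    simp only [mem_filter, mem_primesUpTo hx0, not_lt] at hp
    exact ⟨hp.1.1.1, hp.1.2, hp.2, Nat.log_mono_right (Nat.le_floor hp.1.1.2)⟩
  have htop : log (log (log ((2 : ℝ) ^ (N + 1)))) ≤ log 2 + log (log (log x)) := by
    refine (log_log_log_le_log_log_log ?_ ?_).trans (log_log_log_two_mul_le hx)
    · calc (16 : ℝ) = 2 ^ 4 := by norm_num
        _ ≤ 2 ^ (N + 1) := pow_le_pow_right₀ one_le_two (by omega)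
    · rw [pow_succ']; linarith
  rw [← sum_filter_add_sum_filter_not _ (· < 16)]
  calc _ ≤ 16 + 4 * K / log 2 * (log 2 + log (log (log x))) := by
        have := log_pos one_lt_two
        gcongr
        exact hlarge.trans (by gcongr)
    _ = 16 + 4 * K + 4 * K / log 2 * log (log (log x)) := by
        have := log_pos one_lt_two
        field_simp
        ring

theorem exists_sum_one_div_le_mul_log_log_log {K c : ℝ} (hc : 1 ≤ c)
    (hθ : ∀ y, 16 ≤ y → thetaOn P y ≤ K * y / log (log y) ^ c) :
    ∃ K' : ℝ, ∀ x : ℝ, 16 ≤ x →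
      ∑ p ∈ (primesUpTo x).filter P, (1 : ℝ) / p ≤ K' * log (log (log x)) := by
  have hK : 0 ≤ K := by
    have hpos : 0 < log (log 16) ^ c := rpow_pos_of_pos (by linarith [one_lt_log_log_sixteen]) c
    have := (thetaOn_nonneg 16).trans (hθ 16 le_rfl)
    rw [le_div_iff₀ hpos] at this
    linarith
  have hθ' : ∀ y, 16 ≤ y → thetaOn P y ≤ K * y / log (log y) := fun y hy =>
    (hθ y hy).trans <| div_le_div_of_nonneg_left (by positivity)
      (by linarith [one_lt_log_log hy]) (self_le_rpow_of_one_le (one_lt_log_log hy).le hc)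
  have hδ : 0 < log (log (log 16)) := log_pos one_lt_log_log_sixteen
  refine ⟨(16 + 4 * K) / log (log (log 16)) + 4 * K / log 2, fun x hx => ?_⟩
  have hmono := log_log_log_le_log_log_log le_rfl hx
  calc _ ≤ 16 + 4 * K + 4 * K / log 2 * log (log (log x)) :=
        sum_one_div_le_add_mul_log_log_log hK hθ' hx
    _ ≤ (16 + 4 * K) / log (log (log 16)) * log (log (log x)) +
          4 * K / log 2 * log (log (log x)) := by
        gcongr
        rw [div_mul_eq_mul_div, le_div_iff₀ hδ]
        gcongr
    _ = _ := by ring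

end

theorem statement13_general (f : ℕ → ℝ) (c₀ : ℝ)
    (h01 : ∀ p : ℕ, p.Prime → f p = 0 ∨ f p = 1)
    (K : ℝ)
    (hK : ∀ y : ℝ, 16 ≤ y →
      ∑ p ∈ primesUpTo y, (1 - f p) * Real.log p ≤
        K * y / (Real.log (Real.log y)) ^ (max 1 c₀)) :
    ∃ K' : ℝ, ∀ x : ℝ, 16 ≤ x →
      Ffun f x ≤ K' * Real.log (Real.log (Real.log x)) := by
  have hθ : ∀ y, 16 ≤ y → thetaOn (fun p => f p = 0) y ≤ K * y / log (log y) ^ max 1 c₀ := by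
    intro y hy
    refine le_trans ?_ (hK y hy)
    rw [thetaOn, sum_filter]
    refine sum_le_sum fun p hp => ?_
    rcases h01 p ((mem_primesUpTo (by linarith)).1 hp).1 with h | h <;> simp [h]
  exact exists_sum_one_div_le_mul_log_log_log (le_max_left 1 c₀) hθ

theorem statement13 (f : ℕ → ℝ) (c₀ : ℝ) (hc₀ : 0 < c₀)
    (hadd : ∀ n : ℕ, 0 < n → f n = ∑ p ∈ n.primeFactors, f p)
    (h01 : ∀ p : ℕ, p.Prime → f p = 0 ∨ f p = 1)
    (K : ℝ)
    (hK : ∀ y : ℝ, 16 ≤ y →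
      ∑ p ∈ primesUpTo y, (1 - f p) * Real.log p ≤
        K * y / (Real.log (Real.log y)) ^ (max 1 c₀)) :
    ∃ K' : ℝ, ∀ x : ℝ, 16 ≤ x →
      Ffun f x ≤ K' * Real.log (Real.log (Real.log x)) :=
  statement13_general f c₀ h01 K hK
end
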